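/- arXiv:2012.04434 — 3 statements merged into one kernel-verified Lean document; each statement's English description precedes it below -/
import Mathlib

section
/- Let A ∈ ℝ^{k×H}, b ∈ ℝ^k, 𝒢 = {g : Gg ≤ q} nonempty, and λ_g > 0. If g⋆ minimizes f(g) = ‖Ag − b‖₂² + λ_g‖g‖₂² over 𝒢 and Ag⋆ ≠ b, then g⋆ also minimizes h(g) = ‖Ag − b‖₂ + β‖g‖₂ over 𝒢, where β = λ_g‖g⋆‖₂ / ‖Ag⋆ − b‖₂. -/
open Matrix BigOperators

/-- Euclidean norm of a real vector. -/
noncomputable def eunorm {ι : Type*} [Fintype ι] (v : ι → ℝ) : ℝ :=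
  Real.sqrt (∑ i, v i ^ 2)

/-- Frobenius norm of a real matrix. -/
noncomputable def frnorm {ι κ : Type*} [Fintype ι] [Fintype κ] (M : Matrix ι κ ℝ) : ℝ :=
  Real.sqrt (∑ i, ∑ j, M i j ^ 2)

lemma eunorm_nonneg {ι : Type*} [Fintype ι] (v : ι → ℝ) : 0 ≤ eunorm v :=
  Real.sqrt_nonneg _

lemma eunorm_sq {ι : Type*} [Fintype ι] (v : ι → ℝ) : eunorm v ^ 2 = ∑ i, v i ^ 2 :=
  Real.sq_sqrt (Finset.sum_nonneg fun i _ => sq_nonneg _)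

lemma ip_le {ι : Type*} [Fintype ι] (v w : ι → ℝ) :
    ∑ i, v i * w i ≤ eunorm v * eunorm w :=
  Real.sum_mul_le_sqrt_mul_sqrt _ _ _

theorem quadratic_reg_implies_norm_reg_min {k H r : ℕ}
    (A : Matrix (Fin k) (Fin H) ℝ) (b : Fin k → ℝ)
    (G : Matrix (Fin r) (Fin H) ℝ) (q : Fin r → ℝ)
    (𝒢 : Set (Fin H → ℝ))
    (h𝒢 : 𝒢 = {g | ∀ i, G.mulVec g i ≤ q i}) (hne : 𝒢.Nonempty)
    (lg : ℝ) (hlg : 0 < lg)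
    (gstar : Fin H → ℝ) (hmem : gstar ∈ 𝒢)
    (hmin : ∀ g ∈ 𝒢,
      eunorm (A.mulVec gstar - b) ^ 2 + lg * eunorm gstar ^ 2 ≤
        eunorm (A.mulVec g - b) ^ 2 + lg * eunorm g ^ 2)
    (hne' : A.mulVec gstar ≠ b)
    (β : ℝ) (hβ : β = lg * eunorm gstar / eunorm (A.mulVec gstar - b)) :
    ∀ g ∈ 𝒢,
      eunorm (A.mulVec gstar - b) + β * eunorm gstar ≤
        eunorm (A.mulVec g - b) + β * eunorm g := by
  intro g hg
  set u : Fin k → ℝ := A.mulVec gstar - b with hu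
  set v : Fin k → ℝ := A.mulVec g - b with hv
  -- r* > 0
  have hupos : 0 < eunorm u := by
    have hune : u ≠ 0 := sub_ne_zero.2 hne'
    obtain ⟨i, hi⟩ := Function.ne_iff.1 hune
    have h0 : 0 < u i ^ 2 := by simpa using pow_pos (abs_pos.2 hi) 2 |>.trans_le (by rw [sq_abs])
    have hsum : 0 < ∑ j, u j ^ 2 :=
      Finset.sum_pos' (fun j _ => sq_nonneg _) ⟨i, Finset.mem_univ i, h0⟩
    exact Real.sqrt_pos.2 hsum
  -- step A: first-order condition
  set C : ℝ := (∑ i, u i * (v i - u i)) + lg * ∑ i, gstar i * (g i - gstar i) with hC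
  set D : ℝ := (∑ i, (v i - u i) ^ 2) + lg * ∑ i, (g i - gstar i) ^ 2 with hD
  have hDnn : 0 ≤ D := by
    have h1 : (0:ℝ) ≤ ∑ i, (v i - u i) ^ 2 := Finset.sum_nonneg fun i _ => sq_nonneg _
    have h2 : (0:ℝ) ≤ ∑ i, (g i - gstar i) ^ 2 := Finset.sum_nonneg fun i _ => sq_nonneg _
    have := hlg.le
    nlinarith
  have key : ∀ t : ℝ, 0 < t → t ≤ 1 → 0 ≤ 2 * t * C + t ^ 2 * D := by
    intro t ht ht1
    have hgt : gstar + t • (g - gstar) ∈ 𝒢 := by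
      rw [h𝒢]
      intro i
      have hg' := h𝒢 ▸ hg
      have hgs' := h𝒢 ▸ hmem
      have e : G.mulVec (gstar + t • (g - gstar)) i
          = (1 - t) * G.mulVec gstar i + t * G.mulVec g i := by
        simp [Matrix.mulVec_add, Matrix.mulVec_smul, Matrix.mulVec_sub, smul_eq_mul]
        ring
      rw [e]
      calc (1 - t) * G.mulVec gstar i + t * G.mulVec g i
          ≤ (1 - t) * q i + t * q i := by
            have := hgs' i
            have := hg' i
            nlinarith
        _ = q i := by ring
    have hmmm := hmin _ hgt
    have eA : A.mulVec (gstar + t • (g - gstar)) - b = fun i => u i + t * (v i - u i) := by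
      funext i
      simp [hu, hv, Matrix.mulVec_add, Matrix.mulVec_smul, Matrix.mulVec_sub,
        Pi.sub_apply, Pi.add_apply, smul_eq_mul]
      ring
    have eG : gstar + t • (g - gstar) = fun i => gstar i + t * (g i - gstar i) := by
      funext i; simp [smul_eq_mul]
    rw [eA, eG] at hmmm
    rw [eunorm_sq, eunorm_sq, eunorm_sq, eunorm_sq] at hmmm
    have expand1 : ∑ i, (u i + t * (v i - u i)) ^ 2
        = (∑ i, u i ^ 2) + 2 * t * (∑ i, u i * (v i - u i)) + t ^ 2 * ∑ i, (v i - u i) ^ 2 := by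
      rw [Finset.mul_sum, Finset.mul_sum, ← Finset.sum_add_distrib, ← Finset.sum_add_distrib]
      exact Finset.sum_congr rfl fun i _ => by ring
    have expand2 : ∑ i, (gstar i + t * (g i - gstar i)) ^ 2
        = (∑ i, gstar i ^ 2) + 2 * t * (∑ i, gstar i * (g i - gstar i))
          + t ^ 2 * ∑ i, (g i - gstar i) ^ 2 := by
      rw [Finset.mul_sum, Finset.mul_sum, ← Finset.sum_add_distrib, ← Finset.sum_add_distrib]
      exact Finset.sum_congr rfl fun i _ => by ring
    rw [expand1, expand2] at hmmm
    nlinarith [hmmm]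
  have hCnn : 0 ≤ C := by
    by_contra hCneg
    push_neg at hCneg
    set t : ℝ := min 1 ((-C) / (D + 1)) with htdef
    have htpos : 0 < t := lt_min one_pos (div_pos (by linarith) (by linarith))
    have ht1 : t ≤ 1 := min_le_left _ _
    have htD : t * D ≤ -C := by
      have h2 : t ≤ (-C) / (D + 1) := min_le_right _ _
      have : t * D ≤ ((-C) / (D + 1)) * D := mul_le_mul_of_nonneg_right h2 hDnn
      calc t * D ≤ ((-C) / (D + 1)) * D := this
        _ ≤ -C := by
          rw [div_mul_eq_mul_div, div_le_iff₀ (by linarith)]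
          nlinarith
    have hk := key t htpos ht1
    nlinarith
  -- step B
  have hB : (∑ i, u i ^ 2) + lg * ∑ i, gstar i ^ 2 ≤ (∑ i, u i * v i) + lg * ∑ i, gstar i * g i := by
    have e1 : ∑ i, u i * (v i - u i) = (∑ i, u i * v i) - ∑ i, u i ^ 2 := by
      rw [← Finset.sum_sub_distrib]
      exact Finset.sum_congr rfl fun i _ => by ring
    have e2 : ∑ i, gstar i * (g i - gstar i) = (∑ i, gstar i * g i) - ∑ i, gstar i ^ 2 := by
      rw [← Finset.sum_sub_distrib]
      exact Finset.sum_congr rfl fun i _ => by ring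
    rw [hC, e1, e2] at hCnn
    nlinarith
  -- step C: Cauchy–Schwarz
  have cs1 : ∑ i, u i * v i ≤ eunorm u * eunorm v := ip_le u v
  have cs2 : ∑ i, gstar i * g i ≤ eunorm gstar * eunorm g := ip_le gstar g
  -- combine
  have hru : eunorm u ^ 2 = ∑ i, u i ^ 2 := eunorm_sq u
  have hrg : eunorm gstar ^ 2 = ∑ i, gstar i ^ 2 := eunorm_sq gstar
  have main : eunorm u * (eunorm u + β * eunorm gstar) ≤ eunorm u * (eunorm v + β * eunorm g) := by
    have hβ' : β * eunorm u = lg * eunorm gstar := by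
      rw [hβ]; field_simp
    have h1 : eunorm u * (eunorm u + β * eunorm gstar)
        = eunorm u ^ 2 + lg * eunorm gstar ^ 2 := by
      linear_combination eunorm gstar * hβ'
    have h2 : eunorm u * eunorm v + lg * (eunorm gstar * eunorm g)
        ≤ eunorm u * (eunorm v + β * eunorm g) := by
      have : eunorm u * eunorm v + lg * (eunorm gstar * eunorm g)
          = eunorm u * (eunorm v + β * eunorm g) := by
        linear_combination (- eunorm g) * hβ'
      linarith
    calc eunorm u * (eunorm u + β * eunorm gstar)
        = eunorm u ^ 2 + lg * eunorm gstar ^ 2 := h1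
      _ ≤ (∑ i, u i * v i) + lg * ∑ i, gstar i * g i := by rw [hru, hrg]; exact hB
      _ ≤ eunorm u * eunorm v + lg * (eunorm gstar * eunorm g) := by nlinarith [cs1, cs2, hlg.le]
      _ ≤ eunorm u * (eunorm v + β * eunorm g) := h2
  exact le_of_mul_le_mul_left main hupos
end

section
/- Let A ∈ ℝ^{k×H}, b ∈ ℝ^k, 𝒢 = {g : Gg ≤ q} nonempty, and λ_g > 0. If g⋆ minimizes ‖Ag − b‖₂² + λ_g‖g‖₂² over 𝒢 and Ag⋆ = b, then g⋆ also minimizes ‖Ag − b‖₂ + β‖g‖₂ over 𝒢 with β = λ_g‖g⋆‖₂. -/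
open Matrix BigOperators

theorem quadratic_reg_implies_norm_reg_min_degenerate {k H r : ℕ}
    (A : Matrix (Fin k) (Fin H) ℝ) (b : Fin k → ℝ)
    (G : Matrix (Fin r) (Fin H) ℝ) (q : Fin r → ℝ)
    (𝒢 : Set (Fin H → ℝ))
    (h𝒢 : 𝒢 = {g | ∀ i, G.mulVec g i ≤ q i}) (hne : 𝒢.Nonempty)
    (lg : ℝ) (hlg : 0 < lg)
    (gstar : Fin H → ℝ) (hmem : gstar ∈ 𝒢)
    (hmin : ∀ g ∈ 𝒢,
      eunorm (A.mulVec gstar - b) ^ 2 + lg * eunorm gstar ^ 2 ≤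
        eunorm (A.mulVec g - b) ^ 2 + lg * eunorm g ^ 2)
    (heq : A.mulVec gstar = b)
    (β : ℝ) (hβ : β = lg * eunorm gstar) :
    ∀ g ∈ 𝒢,
      eunorm (A.mulVec gstar - b) + β * eunorm gstar ≤
        eunorm (A.mulVec g - b) + β * eunorm g := by
  intro g hg
  have h0 : A.mulVec gstar - b = 0 := by rw [heq]; simp
  have he0 : eunorm (A.mulVec gstar - b) = 0 := by
    rw [h0]; unfold eunorm; simp
  -- key quantities
  set s : ℝ := ∑ i, gstar i * (g i - gstar i) with hs
  set C : ℝ := eunorm (A.mulVec g - b) ^ 2 + lg * ∑ i, (g i - gstar i) ^ 2 with hC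
  have hCnn : 0 ≤ C := by
    apply add_nonneg (sq_nonneg _)
    exact mul_nonneg hlg.le (Finset.sum_nonneg fun i _ => sq_nonneg _)
  -- for t ∈ (0,1], the convex combination is feasible and quadratic optimality gives bound
  have key : ∀ t : ℝ, 0 < t → t ≤ 1 → 0 ≤ t * C + 2 * lg * s := by
    intro t ht ht1
    set gt : Fin H → ℝ := gstar + t • (g - gstar) with hgt
    have hmv : ∀ (m : ℕ) (M : Matrix (Fin m) (Fin H) ℝ),
        M.mulVec gt = M.mulVec gstar + t • (M.mulVec g - M.mulVec gstar) := by
      intro m M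
      rw [hgt, Matrix.mulVec_add, Matrix.mulVec_smul, Matrix.mulVec_sub]
    have hgtmem : gt ∈ 𝒢 := by
      rw [h𝒢]; intro i
      have h1 : G.mulVec gt i = (1 - t) * G.mulVec gstar i + t * G.mulVec g i := by
        rw [hmv]
        simp only [Pi.add_apply, Pi.smul_apply, Pi.sub_apply, smul_eq_mul]
        ring
      have h2 : G.mulVec gstar i ≤ q i := by rw [h𝒢] at hmem; exact hmem i
      have h3 : G.mulVec g i ≤ q i := by rw [h𝒢] at hg; exact hg i
      rw [h1]
      calc (1 - t) * G.mulVec gstar i + t * G.mulVec g i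
          ≤ (1 - t) * q i + t * q i := by
            apply add_le_add
            · exact mul_le_mul_of_nonneg_left h2 (by linarith)
            · exact mul_le_mul_of_nonneg_left h3 ht.le
        _ = q i := by ring
    have hA : A.mulVec gt - b = t • (A.mulVec g - b) := by
      rw [hmv]
      funext i
      simp only [Pi.sub_apply, Pi.add_apply, Pi.smul_apply, smul_eq_mul, heq]
      ring
    have hAn : eunorm (A.mulVec gt - b) ^ 2 = t ^ 2 * eunorm (A.mulVec g - b) ^ 2 := by
      rw [hA, eunorm_sq, eunorm_sq, Finset.mul_sum]
      apply Finset.sum_congr rfl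
      intro i _
      simp only [Pi.smul_apply, smul_eq_mul]
      ring
    have hgn : eunorm gt ^ 2 = eunorm gstar ^ 2 + 2 * t * s + t ^ 2 * ∑ i, (g i - gstar i) ^ 2 := by
      rw [eunorm_sq, eunorm_sq, hs]
      rw [Finset.mul_sum, Finset.mul_sum, ← Finset.sum_add_distrib, ← Finset.sum_add_distrib]
      apply Finset.sum_congr rfl
      intro i _
      simp only [hgt, Pi.add_apply, Pi.smul_apply, Pi.sub_apply, smul_eq_mul]
      ring
    have := hmin gt hgtmem
    rw [he0, hAn, hgn] at this
    have h4 : 0 ≤ t ^ 2 * eunorm (A.mulVec g - b) ^ 2 +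
        lg * (2 * t * s + t ^ 2 * ∑ i, (g i - gstar i) ^ 2) := by nlinarith
    have h5 : 0 ≤ t * (t * C + 2 * lg * s) := by rw [hC]; nlinarith
    nlinarith
  -- conclude s ≥ 0
  have hsnn : 0 ≤ s := by
    by_contra hneg
    push_neg at hneg
    set ε : ℝ := -(2 * lg * s) with hε
    have hεpos : 0 < ε := by
      have : 0 < 2 * lg * (-s) := mul_pos (by positivity) (by linarith)
      rw [hε]; linarith
    set t : ℝ := min 1 (ε / (2 * (C + 1))) with ht
    have hCp : 0 < C + 1 := by linarith
    have htpos : 0 < t := lt_min one_pos (by positivity)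
    have ht1 : t ≤ 1 := min_le_left _ _
    have h6 := key t htpos ht1
    have h7 : t ≤ ε / (2 * (C + 1)) := min_le_right _ _
    have h8 : t * (2 * (C + 1)) ≤ ε :=
      (le_div_iff₀ (by positivity : (0:ℝ) < 2 * (C + 1))).mp h7
    nlinarith
  -- Cauchy-Schwarz finish
  have hcs : ∑ i, gstar i * g i ≤ eunorm gstar * eunorm g := by
    have h1 := Finset.sum_mul_sq_le_sq_mul_sq Finset.univ gstar g
    have h2 : eunorm gstar * eunorm g = Real.sqrt ((∑ i, gstar i ^ 2) * ∑ i, g i ^ 2) := by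
      unfold eunorm
      rw [Real.sqrt_mul (Finset.sum_nonneg fun i _ => sq_nonneg _)]
    rw [h2]
    calc ∑ i, gstar i * g i ≤ |∑ i, gstar i * g i| := le_abs_self _
      _ = Real.sqrt ((∑ i, gstar i * g i) ^ 2) := (Real.sqrt_sq_eq_abs _).symm
      _ ≤ Real.sqrt ((∑ i, gstar i ^ 2) * ∑ i, g i ^ 2) := Real.sqrt_le_sqrt h1
  have hdot : eunorm gstar ^ 2 ≤ ∑ i, gstar i * g i := by
    rw [eunorm_sq]
    have : ∑ i, gstar i * g i - ∑ i, gstar i ^ 2 = s := by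
      rw [hs, ← Finset.sum_sub_distrib]
      apply Finset.sum_congr rfl
      intro i _
      ring
    linarith
  have hfinal : lg * eunorm gstar ^ 2 ≤ lg * (eunorm gstar * eunorm g) :=
    mul_le_mul_of_nonneg_left (le_trans hdot hcs) hlg.le
  have hAg : 0 ≤ eunorm (A.mulVec g - b) := eunorm_nonneg _
  rw [he0, hβ]
  nlinarith [eunorm_nonneg gstar, eunorm_nonneg g]
end

section
/- Consider a discrete-time LTI system x_{t+1} = Ax_t + Bu_t, y_t = Cx_t + Du_t with state dimension n, and let ℓ be its lag (the smallest integer such that the observability matrix col(C, CA, ..., CA^{ℓ−1}) has rank n). If T_ini ≥ ℓ, then for any input/output trajectory (u_ini, y_ini) of length T_ini of the system and any future input sequence u of length N, the future output sequence y of length N that makes col(u_ini, u, y_ini, y) a trajectory of the system is uniquely determined. -/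
open Matrix

/-- col(u, y) of length L is a trajectory of the LTI system (A, B, C, D):
there is a state sequence generating it. -/
def IsTrajectory {n m p : ℕ}
    (A : Matrix (Fin n) (Fin n) ℝ) (B : Matrix (Fin n) (Fin m) ℝ)
    (C : Matrix (Fin p) (Fin n) ℝ) (D : Matrix (Fin p) (Fin m) ℝ)
    (L : ℕ) (u : Fin L → Fin m → ℝ) (y : Fin L → Fin p → ℝ) : Prop :=
  ∃ x : Fin (L + 1) → Fin n → ℝ, ∀ t : Fin L,
    x t.succ = A.mulVec (x t.castSucc) + B.mulVec (u t) ∧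
    y t = C.mulVec (x t.castSucc) + D.mulVec (u t)

theorem unique_continuation_of_lag {n m p : ℕ}
    (A : Matrix (Fin n) (Fin n) ℝ) (B : Matrix (Fin n) (Fin m) ℝ)
    (C : Matrix (Fin p) (Fin n) ℝ) (D : Matrix (Fin p) (Fin m) ℝ)
    (ℓ : ℕ)
    -- ℓ steps of outputs determine the state (observability matrix of depth ℓ has rank n)
    (hobs : ∀ x : Fin n → ℝ,
      (∀ t : ℕ, t < ℓ → C.mulVec ((A ^ t).mulVec x) = 0) → x = 0)
    -- ℓ is the smallest such integer (the lag)
    (hlag : ∀ ℓ' : ℕ, ℓ' < ℓ → ¬ ∀ x : Fin n → ℝ,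
      (∀ t : ℕ, t < ℓ' → C.mulVec ((A ^ t).mulVec x) = 0) → x = 0)
    (Tini N : ℕ) (hTini : ℓ ≤ Tini)
    (uini : Fin Tini → Fin m → ℝ) (yini : Fin Tini → Fin p → ℝ)
    (u : Fin N → Fin m → ℝ)
    (y₁ y₂ : Fin N → Fin p → ℝ)
    (h₁ : IsTrajectory A B C D (Tini + N) (Fin.append uini u) (Fin.append yini y₁))
    (h₂ : IsTrajectory A B C D (Tini + N) (Fin.append uini u) (Fin.append yini y₂)) :
    y₁ = y₂ := by
  obtain ⟨x₁, hx₁⟩ := h₁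
  obtain ⟨x₂, hx₂⟩ := h₂
  -- the state difference evolves autonomously
  have key : ∀ t : ℕ, ∀ ht : t ≤ Tini + N,
      x₁ ⟨t, by omega⟩ - x₂ ⟨t, by omega⟩ = (A ^ t).mulVec (x₁ 0 - x₂ 0) := by
    intro t
    induction t with
    | zero =>
      intro ht
      simp only [pow_zero, Matrix.one_mulVec]
      rfl
    | succ t ih =>
      intro ht
      have htL : t < Tini + N := by omega
      have h1 := hx₁ ⟨t, htL⟩
      have h2 := hx₂ ⟨t, htL⟩
      have hsucc : (⟨t, htL⟩ : Fin (Tini + N)).succ = ⟨t + 1, by omega⟩ := rfl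
      have hcast : (⟨t, htL⟩ : Fin (Tini + N)).castSucc = ⟨t, by omega⟩ := rfl
      rw [hsucc, hcast] at h1 h2
      rw [h1.1, h2.1, pow_succ', ← Matrix.mulVec_mulVec, ← ih (by omega)]
      rw [Matrix.mulVec_sub]
      abel
  -- the initial state difference is annihilated by the observability map
  have hd0 : x₁ 0 - x₂ 0 = 0 := by
    apply hobs
    intro t ht
    have htT : t < Tini := by omega
    have htL : t < Tini + N := by omega
    have h1 := hx₁ ⟨t, htL⟩
    have h2 := hx₂ ⟨t, htL⟩
    have hcast : (⟨t, htL⟩ : Fin (Tini + N)).castSucc = ⟨t, by omega⟩ := rfl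
    rw [hcast] at h1 h2
    have hy : Fin.append yini y₁ ⟨t, htL⟩ = Fin.append yini y₂ ⟨t, htL⟩ := by
      have : (⟨t, htL⟩ : Fin (Tini + N)) = Fin.castAdd N ⟨t, htT⟩ := rfl
      rw [this, Fin.append_left, Fin.append_left]
    have := h1.2.symm.trans (hy.trans h2.2)
    rw [← key t (by omega), Matrix.mulVec_sub]
    have := sub_eq_zero.mpr this
    rw [add_sub_add_right_eq_sub] at this
    exact this
  -- hence all states coincide
  have hx : ∀ t : ℕ, ∀ ht : t ≤ Tini + N,
      x₁ ⟨t, by omega⟩ = x₂ ⟨t, by omega⟩ := by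
    intro t ht
    have := key t ht
    rw [hd0, Matrix.mulVec_zero] at this
    exact sub_eq_zero.mp this
  -- conclude outputs coincide
  funext i
  have hiL : (Tini + i : ℕ) < Tini + N := by omega
  have h1 := hx₁ ⟨Tini + i, hiL⟩
  have h2 := hx₂ ⟨Tini + i, hiL⟩
  have hy1 : Fin.append yini y₁ ⟨Tini + i, hiL⟩ = y₁ i := by
    have : (⟨Tini + i, hiL⟩ : Fin (Tini + N)) = Fin.natAdd Tini i := rfl
    rw [this, Fin.append_right]
  have hy2 : Fin.append yini y₂ ⟨Tini + i, hiL⟩ = y₂ i := by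
    have : (⟨Tini + i, hiL⟩ : Fin (Tini + N)) = Fin.natAdd Tini i := rfl
    rw [this, Fin.append_right]
  have hcast : (⟨Tini + i, hiL⟩ : Fin (Tini + N)).castSucc
      = ⟨Tini + i, by omega⟩ := rfl
  rw [hcast] at h1 h2
  rw [← hy1, ← hy2, h1.2, h2.2, hx (Tini + i) (by omega)]
end
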